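/- Let ζ > 0 and let (μ, φ) be an eigenpair of the beam problem. Then φ‴(0) ≠ 0; that is, the third derivative at the clamped end of a nonzero eigenfunction cannot vanish. -/

import Mathlib

open Set MeasureTheory intervalIntegral

/-- `Dv m f x` is the `m`-th derivative of `f` on the interval `[0,1]`. -/
noncomputable def Dv (m : ℕ) (f : ℝ → ℝ) (x : ℝ) : ℝ :=
  iteratedDerivWithin m f (Icc (0:ℝ) 1) x

/-- The beam boundary conditions. -/
def BeamBC (ζ : ℝ) (f : ℝ → ℝ) : Prop :=
  f 0 = 0 ∧ Dv 1 f 0 = 0 ∧ Dv 2 f 0 = 0 ∧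
  Dv 2 f 1 - ζ * Dv 4 f 1 = 0 ∧
  ζ * Dv 5 f 1 - Dv 3 f 1 = 0 ∧
  ζ * Dv 3 f 1 = 0

/-- An eigenpair `(μ, φ)` of the beam problem. -/
def BeamEigenpair (ζ μ : ℝ) (φ : ℝ → ℝ) : Prop :=
  ContDiffOn ℝ 6 φ (Icc (0:ℝ) 1) ∧ BeamBC ζ φ ∧
  (¬ ∀ x ∈ Icc (0:ℝ) 1, φ x = 0) ∧
  (∀ x ∈ Icc (0:ℝ) 1, Dv 4 φ x - ζ * Dv 6 φ x = μ * φ x)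

/-!
A Rellich-type identity: multiplying the equation `φ⁗ - ζ φ⁽⁶⁾ = μ φ` by
`2 (x - 1) φ' + φ` and integrating by parts gives the functional `H = beamRellich ζ μ φ` with
`H' = 4 (φ'')² + 6 ζ (φ''')² ≥ 0` along solutions. The boundary conditions make `H 1 = 0`
and `H 0 = -ζ φ'''(0)²`. So if `φ'''(0) = 0`, then `H` is constant, `φ''` vanishes
identically, and the clamped conditions at `0` force `φ = 0`.
-/

lemma eqOn_zero_of_hasDerivWithinAt_nonneg {H g : ℝ → ℝ} {a b : ℝ} (hab : a < b)
    (hH : ∀ x ∈ Icc a b, HasDerivWithinAt H (g x) (Icc a b) x)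
    (hg : ∀ x ∈ Icc a b, 0 ≤ g x) (hHab : H b ≤ H a) : EqOn g 0 (Icc a b) := by
  have hmono : MonotoneOn H (Icc a b) :=
    monotoneOn_of_hasDerivWithinAt_nonneg (convex_Icc a b)
      (fun x hx => (hH x hx).continuousWithinAt)
      (fun x hx => (hH x (interior_subset hx)).mono interior_subset)
      (fun x hx => hg x (interior_subset hx))
  have hconst : EqOn H (fun _ => H a) (Icc a b) := fun x hx =>
    le_antisymm ((hmono hx (right_mem_Icc.2 hab.le) hx.2).trans hHab)
      (hmono (left_mem_Icc.2 hab.le) hx hx.1)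
  intro x hx
  exact (uniqueDiffOn_Icc hab x hx).eq_deriv _ (hH x hx)
    ((hasDerivWithinAt_const x _ (H a)).congr hconst (hconst hx))

section Dv

variable {f : ℝ → ℝ} {m n : ℕ} {x : ℝ}

lemma Dv_zero : Dv 0 f = f :=
  funext fun x => congrFun iteratedDerivWithin_zero x

lemma hasDerivWithinAt_Dv (hf : ContDiffOn ℝ n f (Icc 0 1)) (hm : m < n) (hx : x ∈ Icc 0 1) :
    HasDerivWithinAt (Dv m f) (Dv (m + 1) f x) (Icc 0 1) x := by
  rw [Dv, iteratedDerivWithin_succ]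
  exact (hf.differentiableOn_iteratedDerivWithin (by exact_mod_cast hm)
    (uniqueDiffOn_Icc one_pos) x hx).hasDerivWithinAt

lemma Dv_eqOn_zero_of_succ (hf : ContDiffOn ℝ n f (Icc 0 1)) (hm : m < n)
    (hsucc : EqOn (Dv (m + 1) f) 0 (Icc 0 1)) (h0 : Dv m f 0 = 0) :
    EqOn (Dv m f) 0 (Icc 0 1) := by
  intro x hx
  have := norm_image_sub_le_of_norm_deriv_le_segment' (C := 0)
    (fun y hy => hasDerivWithinAt_Dv hf hm hy)
    (fun y hy => by simp [hsucc (Ico_subset_Icc_self hy)]) x hx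
  simpa [h0] using this

end Dv

section Rellich

variable {ζ μ : ℝ} {f : ℝ → ℝ} {x : ℝ}

noncomputable def beamRellich (ζ μ : ℝ) (f : ℝ → ℝ) (x : ℝ) : ℝ :=
  (x - 1) * (μ * f x ^ 2 + Dv 2 f x ^ 2 + ζ * Dv 3 f x ^ 2 - 2 * Dv 1 f x * Dv 3 f x
      + 2 * ζ * Dv 1 f x * Dv 5 f x - 2 * ζ * Dv 2 f x * Dv 4 f x)
    - f x * Dv 3 f x + ζ * f x * Dv 5 f x + 3 * Dv 1 f x * Dv 2 f x
    - 3 * ζ * Dv 1 f x * Dv 4 f x + 5 * ζ * Dv 2 f x * Dv 3 f x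

lemma hasDerivWithinAt_beamRellich (hf : ContDiffOn ℝ 6 f (Icc 0 1))
    (hode : Dv 4 f x - ζ * Dv 6 f x = μ * f x) (hx : x ∈ Icc 0 1) :
    HasDerivWithinAt (beamRellich ζ μ f) (4 * Dv 2 f x ^ 2 + 6 * ζ * Dv 3 f x ^ 2)
      (Icc 0 1) x := by
  have d : ∀ m < 6, HasDerivWithinAt (Dv m f) (Dv (m + 1) f x) (Icc 0 1) x :=
    fun m hm => hasDerivWithinAt_Dv hf (by exact_mod_cast hm) hx
  have d0 : HasDerivWithinAt f (Dv 1 f x) (Icc 0 1) x := by simpa [Dv_zero] using d 0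
  have d1 := d 1 (by norm_num)
  have d2 := d 2 (by norm_num)
  have d3 := d 3 (by norm_num)
  have d4 := d 4 (by norm_num)
  have d5 := d 5 (by norm_num)
  have hbulk := ((((((d0.pow 2).const_mul μ).add (d2.pow 2)).add ((d3.pow 2).const_mul ζ)).sub
    ((d1.const_mul 2).mul d3)).add ((d1.const_mul (2 * ζ)).mul d5)).sub
    ((d2.const_mul (2 * ζ)).mul d4)
  -- the sum of products below unfolds definitionally to `beamRellich ζ μ f`
  have htotal : HasDerivWithinAt (beamRellich ζ μ f) _ (Icc 0 1) x :=
    (((((((hasDerivWithinAt_id x _).sub_const 1).mul hbulk).sub (d0.mul d3)).add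
    ((d0.const_mul ζ).mul d5)).add ((d1.const_mul 3).mul d2)).sub
    ((d1.const_mul (3 * ζ)).mul d4)).add ((d2.const_mul (5 * ζ)).mul d3)
  refine htotal.congr_deriv ?_
  simp only [Pi.add_apply, Pi.sub_apply, Pi.mul_apply, Pi.pow_apply, id, Nat.reduceAdd,
    Nat.cast_ofNat]
  linear_combination (-(2 * (x - 1) * Dv 1 f x + f x)) * hode

lemma BeamBC.beamRellich_zero (h : BeamBC ζ f) : beamRellich ζ μ f 0 = -ζ * Dv 3 f 0 ^ 2 := by
  obtain ⟨h0, h1, h2, -⟩ := h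
  simp only [beamRellich, h0, h1, h2]
  ring

lemma BeamBC.beamRellich_one (hζ : ζ ≠ 0) (h : BeamBC ζ f) : beamRellich ζ μ f 1 = 0 := by
  obtain ⟨-, -, -, h2, h5, h3⟩ := h
  have h3' : Dv 3 f 1 = 0 := (mul_eq_zero.1 h3).resolve_left hζ
  have h5' : Dv 5 f 1 = 0 := by
    rw [h3', sub_zero] at h5
    exact (mul_eq_zero.1 h5).resolve_left hζ
  simp only [beamRellich, h3', h5', sub_self, zero_mul, mul_zero]
  linear_combination 3 * Dv 1 f 1 * h2

end Rellich

/-- The third derivative at the clamped end of a nonzero eigenfunction of the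
beam problem cannot vanish. -/
theorem stmt_9 (ζ : ℝ) (hζ : 0 < ζ) (μ : ℝ) (φ : ℝ → ℝ)
    (h : BeamEigenpair ζ μ φ) : Dv 3 φ 0 ≠ 0 := by
  obtain ⟨hφ, hbc, hnz, hode⟩ := h
  intro h3
  have hflat : EqOn (fun x => 4 * Dv 2 φ x ^ 2 + 6 * ζ * Dv 3 φ x ^ 2) 0 (Icc 0 1) :=
    eqOn_zero_of_hasDerivWithinAt_nonneg one_pos
      (fun x hx => hasDerivWithinAt_beamRellich hφ (hode x hx) hx)
      (fun x _ => by positivity)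
      (by rw [hbc.beamRellich_one hζ.ne', hbc.beamRellich_zero, h3]; simp)
  have hD2 : EqOn (Dv 2 φ) 0 (Icc 0 1) := fun x hx => by
    have := hflat hx
    simp only [Pi.zero_apply] at this ⊢
    nlinarith [sq_nonneg (Dv 2 φ x), mul_nonneg hζ.le (sq_nonneg (Dv 3 φ x))]
  have hD1 := Dv_eqOn_zero_of_succ hφ (by norm_num) hD2 hbc.2.1
  have hD0 := Dv_eqOn_zero_of_succ hφ (by norm_num) hD1 (by rw [Dv_zero]; exact hbc.1)
  exact hnz fun x hx => by simpa [Dv_zero] using hD0 hx
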